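/- arXiv:1702.03789 — 2 statements merged into one kernel-verified Lean document; each statement's English description precedes it below -/
import Mathlib

section
/- Let X and Y be connected graphs of uniformly bounded degree, let f be a coarse embedding of X into Y, and suppose X has exponentially many fat bigons at a base vertex x0. Then Y has exponentially many fat bigons at y0 = f(x0). -/
open SimpleGraph

/-- A graph has uniformly bounded degree if there is a uniform finite bound on
the cardinality of all neighbour sets. -/
def BddDegree {V : Type*} (G : SimpleGraph V) : Prop :=
  ∃ D : ℕ, ∀ v : V, (G.neighborSet v).encard ≤ D

/-- A walk is geodesic if its length realizes the graph distance between its endpoints. -/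
def SimpleGraph.Walk.IsGeodesic {V : Type*} {G : SimpleGraph V} {x y : V}
    (w : G.Walk x y) : Prop :=
  w.length = G.dist x y

/-- A graph is `δ`-hyperbolic if each side of every geodesic triangle is contained in the
closed `δ`-neighbourhood of the union of the other two sides. -/
def GraphHyperbolic {V : Type*} (G : SimpleGraph V) (δ : ℝ) : Prop :=
  ∀ ⦃a b c : V⦄ (γ₁ : G.Walk a b) (γ₂ : G.Walk b c) (γ₃ : G.Walk c a),
    γ₁.IsGeodesic → γ₂.IsGeodesic → γ₃.IsGeodesic →
      ∀ u ∈ γ₁.support, ∃ v, (v ∈ γ₂.support ∨ v ∈ γ₃.support) ∧ (G.dist u v : ℝ) ≤ δ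

/-- `x` admits an `(L,s,C)`-bigon with respect to the basepoint `x₀`: two paths from `x₀`
to `x`, each of length at most `L·d(x₀,x)`, such that any vertex of the first path outside
the `C`-neighbourhood of `{x₀, x}` is at distance more than `s` from any vertex of the
second path outside that neighbourhood. -/
def IsBigonAt {V : Type*} (G : SimpleGraph V) (x₀ : V) (L s C : ℝ) (x : V) : Prop :=
  ∃ α₁ α₂ : G.Walk x₀ x,
    ((α₁.length : ℝ) ≤ L * G.dist x₀ x) ∧ ((α₂.length : ℝ) ≤ L * G.dist x₀ x) ∧
    ∀ u ∈ α₁.support, ∀ v ∈ α₂.support,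
      (C < (G.dist x₀ u : ℝ) ∧ C < (G.dist x u : ℝ)) →
      (C < (G.dist x₀ v : ℝ) ∧ C < (G.dist x v : ℝ)) →
      s < (G.dist u v : ℝ)

/-- The set `B^X(L,s,C)` of vertices admitting an `(L,s,C)`-bigon. -/
def bigonSet {V : Type*} (G : SimpleGraph V) (x₀ : V) (L s C : ℝ) : Set V :=
  {x | IsBigonAt G x₀ L s C x}

/-- The closed ball of radius `n` about `x` in the graph metric. -/
def gBall {V : Type*} (G : SimpleGraph V) (x : V) (n : ℕ) : Set V :=
  {v | G.dist x v ≤ n}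

/-- `X` has exponentially many fat bigons at `x₀`. -/
def HasExpManyFatBigons {V : Type*} (G : SimpleGraph V) (x₀ : V) : Prop :=
  ∃ s₀ c L : ℝ, 0 ≤ s₀ ∧ 1 < c ∧ 1 < L ∧
    ∀ s : ℝ, s₀ ≤ s → ∃ C : ℝ, 0 ≤ C ∧
      {n : ℕ | (c ^ n : ℝ) ≤ ((bigonSet G x₀ L s C ∩ gBall G x₀ n).ncard : ℝ)}.Infinite

/-- `X` has no fat bigons at `x₀`. -/
def HasNoFatBigons {V : Type*} (G : SimpleGraph V) (x₀ : V) : Prop :=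
  ∀ L : ℝ, 1 ≤ L → ∃ s : ℝ, 0 ≤ s ∧ ∀ C : ℝ, 0 ≤ C →
    ∃ R : ℕ, ∀ x ∈ bigonSet G x₀ L s C, G.dist x₀ x ≤ R

/-- A coarse embedding of the graph `G` into the graph `H`, with multiplicative constant `K`
and compression function `ρ`. -/
def IsCoarseEmbedding {V W : Type*} (G : SimpleGraph V) (H : SimpleGraph W)
    (f : V → W) (K : ℝ) (ρ : ℕ → ℕ) : Prop :=
  1 ≤ K ∧ Filter.Tendsto ρ Filter.atTop Filter.atTop ∧
    ∀ x y : V, (ρ (G.dist x y) : ℝ) ≤ (H.dist (f x) (f y) : ℝ) ∧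
      (H.dist (f x) (f y) : ℝ) ≤ K * (G.dist x y : ℝ)

/-- The Cayley graph of a group with respect to a (symmetric) set `S`. -/
def cayleyGraph (G : Type*) [Group G] (S : Set G) : SimpleGraph G :=
  SimpleGraph.fromRel (fun x y => x⁻¹ * y ∈ S)

/-- The Cayley graph of `G` w.r.t. the basepoint `1` has exponential growth:
`|B_n(1)|^(1/n)` converges to a limit `> 1`. -/
def HasExpGrowth {V : Type*} (G : SimpleGraph V) (x₀ : V) : Prop :=
  ∃ a : ℝ, 1 < a ∧
    Filter.Tendsto (fun n : ℕ => ((gBall G x₀ n).ncard : ℝ) ^ ((n : ℝ)⁻¹))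
      Filter.atTop (nhds a)

/-- `Div_X(n) ≤ M`: for all vertices `a b` with `d(a,b) ≤ n` and every `c ∉ {a, b}`, there is
a path from `a` to `b` of length at most `M` avoiding the ball around `c` of radius
`(1/2)·d(c,{a,b}) − 2`. -/
def DivLE {V : Type*} (G : SimpleGraph V) (n : ℕ) (M : ℝ) : Prop :=
  ∀ a b c : V, G.dist a b ≤ n → c ≠ a → c ≠ b →
    ∃ w : G.Walk a b, (w.length : ℝ) ≤ M ∧
      ∀ u ∈ w.support, ((min (G.dist c a) (G.dist c b) : ℝ)) / 2 - 2 < (G.dist c u : ℝ)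

/-- A group (given as a graph) is one-ended. -/
def OneEnded {V : Type*} (G : SimpleGraph V) : Prop :=
  ∃! e, e ∈ G.end

/-!
Take `k = ⌈K⌉₊`, so that `d(f x, f y) ≤ k d(x, y)`. Replacing each edge of a walk by a
geodesic between the images of its ends turns the two sides of a bigon at `x` into two walks
from `f x₀` to `f x` staying `k`-close to the images of the original sides. Fatness survives
because `ρ → ∞`: vertices more than `s` apart in `X` map to vertices more than `s' + 2k` apart,
and the radius `C` only grows to `k (C + 1)`. The length bound survives as soon as
`n ≤ q d(f x₀, f x)` for the tip `x ∈ B_n(x₀)`. The tips violating this map into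
`B_{n/q}(f x₀)`, and fibres of `f` have at most `B` points, so there are at most
`B (D + 1)^{n/q}` of them, which is at most half of `c^n` once `q` is large. Hence at least
`c^n / 2B ≥ (√c)^n` bigons of `Y` lie in `B_{kn}(f x₀)`.
-/

namespace SimpleGraph

variable {V W : Type*} {G : SimpleGraph V} {H : SimpleGraph W}

theorem Walk.dist_le_length_of_mem_support {u v w : V} (p : G.Walk u v) (hw : w ∈ p.support) :
    G.dist u w ≤ p.length := by
  classical
  exact (G.dist_le _).trans (p.length_takeUntil_le_length hw)

theorem Walk.exists_walk_map_of_adj_dist_le (hH : H.Connected) {f : V → W} {k : ℕ}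
    (hf : ∀ u v, G.Adj u v → H.dist (f u) (f v) ≤ k) {x y : V} (p : G.Walk x y) :
    ∃ q : H.Walk (f x) (f y), q.length ≤ k * p.length ∧
      ∀ w ∈ q.support, ∃ u ∈ p.support, H.dist (f u) w ≤ k := by
  induction p with
  | nil => exact ⟨.nil, by simp, fun w hw => ⟨_, Walk.start_mem_support _, by simp_all⟩⟩
  | @cons a b _ hab p ih =>
    obtain ⟨q, hq, hqsupp⟩ := ih
    obtain ⟨g, hg⟩ := hH.exists_walk_length_eq_dist (f a) (f b)
    have hgk : g.length ≤ k := hg ▸ hf a b hab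
    refine ⟨g.append q, ?_, fun w hw => ?_⟩
    · rw [Walk.length_append, Walk.length_cons, mul_add_one]
      omega
    rcases (Walk.mem_support_append_iff _ _).1 hw with hw | hw
    · exact ⟨a, Walk.start_mem_support _, (g.dist_le_length_of_mem_support hw).trans hgk⟩
    · obtain ⟨u, hu, hdu⟩ := hqsupp w hw
      exact ⟨u, Walk.support_cons _ _ ▸ List.mem_cons_of_mem _ hu, hdu⟩

theorem gBall_succ_subset (hG : G.Connected) (x : V) (n : ℕ) :
    gBall G x (n + 1) ⊆ ⋃ v ∈ gBall G x n, insert v (G.neighborSet v) := by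
  intro w hw
  obtain ⟨p, hp⟩ := hG.exists_walk_length_eq_dist w x
  cases p with
  | nil => exact Set.mem_biUnion (show x ∈ gBall G x n by simp [gBall]) (Set.mem_insert x _)
  | @cons _ v _ hwv q =>
    have hq : G.dist x v ≤ n := by
      have hwx : G.dist x w = q.length + 1 := by rw [dist_comm]; simpa using hp.symm
      have : G.dist x v ≤ q.length := by rw [dist_comm]; exact G.dist_le q
      change G.dist x w ≤ n + 1 at hw
      omega
    exact Set.mem_biUnion hq (Set.mem_insert_of_mem v hwv.symm)

theorem encard_gBall_le (hG : G.Connected) {D : ℕ} (hD : ∀ v, (G.neighborSet v).encard ≤ D)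
    (x : V) (n : ℕ) : (gBall G x n).encard ≤ ((D + 1) ^ n : ℕ) := by
  induction n with
  | zero =>
    have : gBall G x 0 = {x} := by
      ext v; simp [gBall, hG.dist_eq_zero_iff, eq_comm]
    simp [this]
  | succ n ih =>
    have hfin := Set.finite_of_encard_le_coe ih
    calc (gBall G x (n + 1)).encard
        ≤ (⋃ v ∈ hfin.toFinset, insert v (G.neighborSet v)).encard := by
          simpa using Set.encard_le_encard (gBall_succ_subset hG x n)
      _ ≤ ∑ v ∈ hfin.toFinset, (insert v (G.neighborSet v)).encard :=
          Finset.set_encard_biUnion_le _ _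
      _ ≤ hfin.toFinset.card • ((D + 1 : ℕ) : ℕ∞) := by
          refine Finset.sum_le_card_nsmul _ _ _ fun v _ => ?_
          exact (Set.encard_insert_le _ _).trans (by push_cast; gcongr; exact hD v)
      _ ≤ ((D + 1) ^ (n + 1) : ℕ) := by
          rw [nsmul_eq_mul, ← Set.encard_coe_eq_coe_finsetCard, hfin.coe_toFinset, pow_succ]
          push_cast
          gcongr
          exact_mod_cast ih

theorem finite_gBall (hG : G.Connected) {D : ℕ} (hD : ∀ v, (G.neighborSet v).encard ≤ D)
    (x : V) (n : ℕ) : (gBall G x n).Finite :=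
  Set.finite_of_encard_le_coe (encard_gBall_le hG hD x n)

theorem ncard_gBall_le (hG : G.Connected) {D : ℕ} (hD : ∀ v, (G.neighborSet v).encard ≤ D)
    (x : V) (n : ℕ) : (gBall G x n).ncard ≤ (D + 1) ^ n :=
  (Set.encard_le_coe_iff_finite_ncard_le.1 (encard_gBall_le hG hD x n)).2

end SimpleGraph

theorem ncard_le_mul_ncard_image {V W : Type*} {G : SimpleGraph V} (hG : G.Connected) {D : ℕ}
    (hD : ∀ v, (G.neighborSet v).encard ≤ D) {f : V → W} {M : ℕ}
    (hf : ∀ x y, f x = f y → G.dist x y ≤ M) {S : Set V} (hS : S.Finite) :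
    S.ncard ≤ (D + 1) ^ M * (f '' S).ncard := by
  classical
  lift S to Finset V using hS
  rw [Set.ncard_coe_finset, ← Finset.coe_image, Set.ncard_coe_finset]
  refine Finset.card_le_mul_card_image _ _ fun y hy => ?_
  obtain ⟨x, -, rfl⟩ := Finset.mem_image.1 hy
  have hball := finite_gBall hG hD x M
  calc _ ≤ hball.toFinset.card := Finset.card_le_card fun z hz => by
          simp only [Finset.mem_filter] at hz
          simpa [gBall] using hf x z hz.2.symm
    _ = (gBall G x M).ncard := (Set.ncard_eq_toFinset_card _ _).symm
    _ ≤ _ := ncard_gBall_le hG hD x M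

theorem pow_div_le_pow {a b : ℝ} {q : ℕ} (ha : 0 ≤ a) (hb : 1 ≤ b) (hab : a ≤ b ^ q)
    (n : ℕ) : a ^ (n / q) ≤ b ^ n :=
  calc a ^ (n / q) ≤ (b ^ q) ^ (n / q) := by gcongr
    _ ≤ b ^ n := by rw [← pow_mul]; exact pow_le_pow_right₀ hb (Nat.mul_div_le n q)

theorem exists_one_lt_pow_eq {c : ℝ} (hc : 1 < c) {m : ℕ} (hm : m ≠ 0) :
    ∃ c' : ℝ, 1 < c' ∧ c' ^ m = c :=
  ⟨c ^ (m : ℝ)⁻¹, Real.one_lt_rpow hc (by positivity),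
    Real.rpow_inv_natCast_pow (by linarith) hm⟩

theorem le_of_mul_self_le_mul_add {x B T A : ℝ} (hB : 0 < B) (hA : A ≤ x) (hx : 2 * B ≤ x)
    (h : x * x ≤ B * (T + A)) : x ≤ T := by
  nlinarith

namespace IsCoarseEmbedding

variable {V W : Type*} {G : SimpleGraph V} {H : SimpleGraph W} {f : V → W} {K : ℝ}
  {ρ : ℕ → ℕ}

theorem dist_le_ceil_mul (hf : IsCoarseEmbedding G H f K ρ) (x y : V) :
    H.dist (f x) (f y) ≤ ⌈K⌉₊ * G.dist x y := by
  have : (H.dist (f x) (f y) : ℝ) ≤ ⌈K⌉₊ * G.dist x y :=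
    (hf.2.2 x y).2.trans (by gcongr; exact Nat.le_ceil K)
  exact_mod_cast this

theorem exists_dist_lt (hf : IsCoarseEmbedding G H f K ρ) (R : ℝ) :
    ∃ M : ℕ, ∀ x y, (H.dist (f x) (f y) : ℝ) ≤ R → G.dist x y < M := by
  obtain ⟨M, hM⟩ := Filter.eventually_atTop.1 (hf.2.1.eventually_gt_atTop ⌊R⌋₊)
  refine ⟨M, fun x y hxy => ?_⟩
  by_contra! hM'
  linarith [(hf.2.2 x y).1, Nat.lt_of_floor_lt (hM _ hM')]

theorem exists_dist_le_of_map_eq (hf : IsCoarseEmbedding G H f K ρ) :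
    ∃ M : ℕ, ∀ x y, f x = f y → G.dist x y ≤ M := by
  obtain ⟨M, hM⟩ := hf.exists_dist_lt 0
  exact ⟨M, fun x y hxy => (hM x y (by simp [hxy])).le⟩

theorem exists_lt_dist_of_lt_dist (hf : IsCoarseEmbedding G H f K ρ) (s₀ R : ℝ) :
    ∃ s ≥ s₀, ∀ u v, s < G.dist u v → R < H.dist (f u) (f v) := by
  obtain ⟨N, hN⟩ := hf.exists_dist_lt R
  refine ⟨max s₀ N, le_max_left _ _, fun u v huv => ?_⟩
  by_contra! h
  have : (G.dist u v : ℝ) < N := by exact_mod_cast hN u v h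
  linarith [le_max_right s₀ (N : ℝ)]

end IsCoarseEmbedding

section BigonTransfer

variable {V W : Type*} {X : SimpleGraph V} {Y : SimpleGraph W} {f : V → W} {k : ℕ}

theorem IsBigonAt.map (hY : Y.Connected) (hlip : ∀ x y, Y.dist (f x) (f y) ≤ k * X.dist x y)
    {s s' : ℝ} (hsep : ∀ u v, s < X.dist u v → s' + 2 * k < Y.dist (f u) (f v))
    {x₀ x : V} {L L' C : ℝ}
    (hlen : k * L * X.dist x₀ x ≤ L' * Y.dist (f x₀) (f x)) (hx : IsBigonAt X x₀ L s C x) :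
    IsBigonAt Y (f x₀) L' s' (k * (C + 1)) (f x) := by
  obtain ⟨α₁, α₂, hα₁, hα₂, hfat⟩ := hx
  have hadj : ∀ u v, X.Adj u v → Y.dist (f u) (f v) ≤ k := fun u v h => by
    simpa [dist_eq_one_iff_adj.2 h] using hlip u v
  obtain ⟨β₁, hβ₁, hsupp₁⟩ := α₁.exists_walk_map_of_adj_dist_le hY hadj
  obtain ⟨β₂, hβ₂, hsupp₂⟩ := α₂.exists_walk_map_of_adj_dist_le hY hadj
  have hlength : ∀ (α : X.Walk x₀ x) (β : Y.Walk (f x₀) (f x)),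
      β.length ≤ k * α.length → α.length ≤ L * X.dist x₀ x →
        β.length ≤ L' * Y.dist (f x₀) (f x) := fun α β hβ hα =>
    calc (β.length : ℝ) ≤ k * α.length := by exact_mod_cast hβ
      _ ≤ k * (L * X.dist x₀ x) := by gcongr
      _ ≤ L' * Y.dist (f x₀) (f x) := by linarith
  have hfar : ∀ p u w, Y.dist (f u) w ≤ k → k * (C + 1) < Y.dist (f p) w →
      C < X.dist p u := fun p u w huw hpw => by
    have htri : (Y.dist (f p) w : ℝ) ≤ k * X.dist p u + k := by
      exact_mod_cast (hY.dist_triangle (v := f u)).trans (add_le_add (hlip p u) huw)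
    by_contra! h
    nlinarith [(Nat.cast_nonneg k : (0 : ℝ) ≤ k)]
  refine ⟨β₁, β₂, hlength _ _ hβ₁ hα₁, hlength _ _ hβ₂ hα₂, ?_⟩
  rintro u' hu' v' hv' ⟨hu'₀, hu'x⟩ ⟨hv'₀, hv'x⟩
  obtain ⟨u, hu, hdu⟩ := hsupp₁ u' hu'
  obtain ⟨v, hv, hdv⟩ := hsupp₂ v' hv'
  have hsuv := hsep u v (hfat u hu v hv ⟨hfar _ _ _ hdu hu'₀, hfar _ _ _ hdu hu'x⟩
    ⟨hfar _ _ _ hdv hv'₀, hfar _ _ _ hdv hv'x⟩)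
  have htri : Y.dist (f u) (f v) ≤ k + Y.dist u' v' + k := by
    have h₁ := hY.dist_triangle (u := f u) (v := u') (w := f v)
    have h₂ := hY.dist_triangle (u := u') (v := v') (w := f v)
    rw [dist_comm (u := v')] at h₂
    omega
  have : (Y.dist (f u) (f v) : ℝ) ≤ k + Y.dist u' v' + k := by exact_mod_cast htri
  linarith

theorem ncard_bigonSet_inter_gBall_le (hX : X.Connected) {DX : ℕ}
    (hDX : ∀ v, (X.neighborSet v).encard ≤ DX) (hY : Y.Connected) {DY : ℕ}
    (hDY : ∀ w, (Y.neighborSet w).encard ≤ DY) {M : ℕ}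
    (hM : ∀ x y, f x = f y → X.dist x y ≤ M)
    (hlip : ∀ x y, Y.dist (f x) (f y) ≤ k * X.dist x y)
    {s s' : ℝ} (hsep : ∀ u v, s < X.dist u v → s' + 2 * k < Y.dist (f u) (f v))
    (x₀ : V) {L : ℝ} (hL : 0 ≤ L) (C : ℝ) {q : ℕ} (hq : 0 < q) (n : ℕ) :
    (bigonSet X x₀ L s C ∩ gBall X x₀ n).ncard ≤ (DX + 1) ^ M *
      ((bigonSet Y (f x₀) (k * L * q) s' (k * (C + 1)) ∩ gBall Y (f x₀) (k * n)).ncard +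
        (DY + 1) ^ (n / q)) := by
  set S := bigonSet X x₀ L s C ∩ gBall X x₀ n
  set T := bigonSet Y (f x₀) (k * L * q) s' (k * (C + 1)) ∩ gBall Y (f x₀) (k * n)
  have hmaps : f '' S ⊆ T ∪ gBall Y (f x₀) (n / q) := by
    rintro _ ⟨x, ⟨hxbig, hxn⟩, rfl⟩
    by_cases hnear : Y.dist (f x₀) (f x) ≤ n / q
    · exact Or.inr hnear
    have hnq : n ≤ q * Y.dist (f x₀) (f x) := by
      have := (Nat.div_lt_iff_lt_mul hq).1 (not_le.1 hnear)
      linarith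
    have hxn' : (X.dist x₀ x : ℝ) ≤ n := by exact_mod_cast hxn
    have hnq' : (n : ℝ) ≤ q * Y.dist (f x₀) (f x) := by exact_mod_cast hnq
    refine Or.inl ⟨hxbig.map hY hlip hsep ?_, (hlip x₀ x).trans (Nat.mul_le_mul_left k hxn)⟩
    calc (k : ℝ) * L * X.dist x₀ x ≤ k * L * (q * Y.dist (f x₀) (f x)) := by
          gcongr; exact hxn'.trans hnq'
      _ = k * L * q * Y.dist (f x₀) (f x) := by ring
  have hfinT : T.Finite := (finite_gBall hY hDY _ _).subset Set.inter_subset_right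
  calc S.ncard ≤ (DX + 1) ^ M * (f '' S).ncard :=
        ncard_le_mul_ncard_image hX hDX hM
          ((finite_gBall hX hDX x₀ n).subset Set.inter_subset_right)
    _ ≤ (DX + 1) ^ M * (T ∪ gBall Y (f x₀) (n / q)).ncard := by
        gcongr
        exact hfinT.union (finite_gBall hY hDY _ _)
    _ ≤ (DX + 1) ^ M * (T.ncard + (DY + 1) ^ (n / q)) := by
        gcongr
        exact (Set.ncard_union_le _ _).trans (by gcongr; exact ncard_gBall_le hY hDY _ _)

end BigonTransfer

/-- A coarse embedding transports exponentially many fat bigons at `x₀`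
to exponentially many fat bigons at `f x₀`. -/
theorem coarseEmbedding_hasExpManyFatBigons
    {V W : Type*} (X : SimpleGraph V) (Y : SimpleGraph W)
    (hXconn : X.Connected) (hXdeg : BddDegree X)
    (hYconn : Y.Connected) (hYdeg : BddDegree Y)
    (f : V → W) (K : ℝ) (ρ : ℕ → ℕ)
    (hf : IsCoarseEmbedding X Y f K ρ)
    (x₀ : V) (hX : HasExpManyFatBigons X x₀) :
    HasExpManyFatBigons Y (f x₀) := by
  obtain ⟨s₀, c, L, -, hc, hL, hbig⟩ := hX
  obtain ⟨DX, hDX⟩ := hXdeg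
  obtain ⟨DY, hDY⟩ := hYdeg
  obtain ⟨M, hM⟩ := hf.exists_dist_le_of_map_eq
  set k := ⌈K⌉₊
  have hk : 0 < k := Nat.ceil_pos.2 (by linarith [hf.1])
  obtain ⟨c', hc', hc'c⟩ := exists_one_lt_pow_eq hc (by positivity : 2 * k ≠ 0)
  have hb : 1 < c' ^ k := one_lt_pow₀ hc' hk.ne'
  obtain ⟨q, hqb, hq⟩ := (((tendsto_pow_atTop_atTop_of_one_lt hb).eventually_ge_atTop
    ((DY : ℝ) + 1)).and (Filter.eventually_gt_atTop 0)).exists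
  obtain ⟨N₀, hN₀⟩ := Filter.eventually_atTop.1
    ((tendsto_pow_atTop_atTop_of_one_lt hb).eventually_ge_atTop (2 * (DX + 1) ^ M))
  refine ⟨0, c', k * L * q, le_rfl, hc', ?_, fun s' _ => ?_⟩
  · have : (1 : ℝ) ≤ k * q := by exact_mod_cast Nat.one_le_iff_ne_zero.2 (by positivity)
    nlinarith
  obtain ⟨s, hs, hsep⟩ := hf.exists_lt_dist_of_lt_dist s₀ (s' + 2 * k)
  obtain ⟨C, hC, hinf⟩ := hbig s hs
  refine ⟨k * (C + 1), by positivity, ((hinf.sdiff (Set.finite_lt_nat N₀)).image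
    (mul_right_injective₀ hk.ne').injOn).mono ?_⟩
  rintro _ ⟨n, ⟨hn, hnN₀⟩, rfl⟩
  have hcount := ncard_bigonSet_inter_gBall_le hXconn hDX hYconn hDY hM hf.dist_le_ceil_mul hsep
    x₀ (zero_le_one.trans hL.le) C hq n
  -- the square of `(c' ^ k) ^ n` is `c ^ n`
  refine (pow_mul c' k n).trans_le (le_of_mul_self_le_mul_add (by positivity)
    (pow_div_le_pow (by positivity) hb.le hqb n) (hN₀ n (not_lt.1 hnN₀)) ?_)
  rw [← mul_pow, ← pow_add, ← two_mul, hc'c]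
  exact_mod_cast hn.trans (Nat.cast_le.2 hcount)
end

section
/- Let X be a δ-hyperbolic connected graph of uniformly bounded degree (δ ≥ 1). Then X has no fat bigons: for every L ≥ 1 there exists s ≥ 0 such that for every C ≥ 0 the set B^X(L,s,C) is a bounded subset of X. -/
open SimpleGraph

/-!
A path that keeps more than `c = δ k` away from a stretch of length `n` of a geodesic, in a
`δ`-hyperbolic graph, has length at least of order `n 2^k / (δ k)`: bisecting a short path
and using thin triangles shows that a geodesic stays within `δ log₂ ℓ` of any path of
length `ℓ` with the same endpoints, and an induction on `n` that either splits the path or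
pushes it to distance `4c` turns this into linear growth in `n`.

Sweeping along a walk `p` from `x₀` to `x` of length at most `K d(x₀, x)`, the times at
which the geodesic `γ` from `x₀` to `x` is more than `12 δ m` from `p` are covered by such
detours of disjoint pieces of `p`, so they fill at most a fraction `200 δ m K / 2^m` of `γ`,
a sixth when `m = 1200 δ K`. For the two sides of a bigon, some point of the middle third of
`γ` is therefore within `12 δ m` of both, which yields points of the two sides at distance at
most `s = 24 δ m` outside the `C`-neighbourhood of `{x₀, x}` as soon as `d(x₀, x)` is large.
-/

lemma Nat.mul_self_le_two_pow {k : ℕ} (hk : 4 ≤ k) : k * k ≤ 2 ^ k := by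
  induction k, hk using Nat.le_induction with
  | base => norm_num
  | succ k hk ih => rw [pow_succ]; nlinarith

lemma exists_notMem_notMem_of_six_mul_card_le {F₁ F₂ : Finset ℕ} {n W : ℕ} (hW : 3 * W ≤ n)
    (h₁ : 6 * F₁.card ≤ n) (h₂ : 6 * F₂.card ≤ n) :
    ∃ t, W ≤ t ∧ t + W ≤ n ∧ t ∉ F₁ ∧ t ∉ F₂ := by
  by_contra! h
  have hsub : Finset.Icc W (n - W) ⊆ F₁ ∪ F₂ := fun t ht => by
    rw [Finset.mem_Icc] at ht
    by_cases ht₁ : t ∈ F₁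
    · exact Finset.mem_union_left _ ht₁
    · exact Finset.mem_union_right _ (h t ht.1 (by omega) ht₁)
  have := (Finset.card_le_card hsub).trans (Finset.card_union_le _ _)
  rw [Nat.card_Icc] at this
  omega

lemma add_one_mul_two_pow_le_of_le_four_mul {n n' k M : ℕ} (hk : 2 ≤ k)
    (hn : n + 1 ≤ 3 * (n' + 1)) (h : (n' + 1) * 2 ^ (4 * k) ≤ 4 * M) : (n + 1) * 2 ^ k ≤ M := by
  have h3k : 2 ^ 4 ≤ 2 ^ (3 * k) := Nat.pow_le_pow_right two_pos (by omega)
  rw [show 4 * k = 3 * k + k by ring, pow_add] at h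
  have h16 : (n' + 1) * 2 ^ 4 * 2 ^ k ≤ (n' + 1) * 2 ^ (3 * k) * 2 ^ k := by gcongr
  nlinarith [Nat.mul_le_mul_right (2 ^ k) hn]

namespace SimpleGraph

variable {V : Type*} {G : SimpleGraph V}

namespace Walk

variable {u v w x y : V}

def slice (p : G.Walk u v) {i j : ℕ} (hij : i ≤ j) : G.Walk (p.getVert i) (p.getVert j) :=
  ((p.drop i).take (j - i)).copy rfl (by rw [drop_getVert, Nat.add_sub_cancel' hij])

lemma isSubwalk_slice (p : G.Walk u v) {i j : ℕ} (hij : i ≤ j) : (p.slice hij).IsSubwalk p := by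
  have h := (isSubwalk_take (p.drop i) (j - i)).trans (isSubwalk_drop p i)
  simpa [slice] using h.copy rfl (by rw [drop_getVert, Nat.add_sub_cancel' hij]) rfl rfl

lemma length_slice (p : G.Walk u v) {i j : ℕ} (hij : i ≤ j) (hj : j ≤ p.length) :
    (p.slice hij).length = j - i := by
  simp only [slice, length_copy, take_length, drop_length]
  omega

lemma getVert_slice (p : G.Walk u v) {i j k : ℕ} (hij : i ≤ j) (hk : k ≤ j - i) :
    (p.slice hij).getVert k = p.getVert (i + k) := by
  simp [slice, Nat.min_eq_right hk]

lemma getVert_mem_support_slice (p : G.Walk u v) {i j k : ℕ} (hij : i ≤ j) (hik : i ≤ k)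
    (hkj : k ≤ j) : p.getVert k ∈ (p.slice hij).support := by
  rw [show k = i + (k - i) by omega, ← getVert_slice p hij (by omega : k - i ≤ j - i)]
  exact getVert_mem_support _ _

lemma exists_eq_getVert_of_mem_support_slice (p : G.Walk u v) {i j : ℕ} (hij : i ≤ j)
    (hj : j ≤ p.length) (hw : w ∈ (p.slice hij).support) :
    ∃ k, i ≤ k ∧ k ≤ j ∧ w = p.getVert k := by
  obtain ⟨l, rfl, hl⟩ := mem_support_iff_exists_getVert.mp hw
  rw [length_slice _ _ hj] at hl
  exact ⟨i + l, by omega, by omega, getVert_slice p hij hl⟩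

lemma dist_start_le_of_mem_support (p : G.Walk u v) (hw : w ∈ p.support) :
    G.dist u w ≤ p.length := by
  classical
  exact (dist_le (p.takeUntil w hw)).trans (p.length_takeUntil_le_length hw)

lemma dist_le_of_mem_support_end (p : G.Walk u v) (hw : w ∈ p.support) :
    G.dist w v ≤ p.length := by
  classical
  exact (dist_le (p.dropUntil w hw)).trans (p.length_dropUntil_le_length hw)

lemma IsGeodesic.reverse {γ : G.Walk u v} (hγ : γ.IsGeodesic) : γ.reverse.IsGeodesic := by
  rw [IsGeodesic, length_reverse, hγ, dist_comm]

lemma IsGeodesic.slice {γ : G.Walk u v} (hγ : γ.IsGeodesic) {i j : ℕ} (hij : i ≤ j) :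
    (γ.slice hij).IsGeodesic :=
  length_eq_dist_of_subwalk hγ (γ.isSubwalk_slice hij)

lemma IsGeodesic.dist_getVert {γ : G.Walk u v} (hγ : γ.IsGeodesic) {i j : ℕ} (hij : i ≤ j)
    (hj : j ≤ γ.length) : G.dist (γ.getVert i) (γ.getVert j) = j - i := by
  rw [← hγ.slice hij, length_slice _ _ hj]

lemma IsGeodesic.dist_start_getVert {γ : G.Walk u v} (hγ : γ.IsGeodesic) {t : ℕ}
    (ht : t ≤ γ.length) : G.dist u (γ.getVert t) = t := by
  simpa using hγ.dist_getVert (Nat.zero_le t) ht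

lemma IsGeodesic.dist_getVert_end {γ : G.Walk u v} (hγ : γ.IsGeodesic) {t : ℕ}
    (ht : t ≤ γ.length) : G.dist (γ.getVert t) v = γ.length - t := by
  simpa using hγ.dist_getVert ht le_rfl

lemma IsGeodesic.dist_getVert_le_add (hconn : G.Connected) {γ : G.Walk u v}
    (hγ : γ.IsGeodesic) (w : V) {s t : ℕ} (hs : s ≤ γ.length) (ht : t ≤ γ.length) :
    G.dist w (γ.getVert t) ≤ G.dist w (γ.getVert s) + (t - s + (s - t)) := by
  have := hconn.dist_triangle (u := w) (v := γ.getVert s) (w := γ.getVert t)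
  rcases le_total s t with hst | hts
  · rw [hγ.dist_getVert hst ht] at this; omega
  · rw [dist_comm (u := γ.getVert s), hγ.dist_getVert hts hs] at this; omega

lemma IsGeodesic.lt_dist_of_dist_getVert_le (hconn : G.Connected) {γ : G.Walk u v}
    (hγ : γ.IsGeodesic) {w : V} {t r D : ℕ} (ht : D + r < t) (ht' : t + D + r < γ.length)
    (hw : G.dist w (γ.getVert t) ≤ r) : D < G.dist u w ∧ D < G.dist v w := by
  have h₁ := hconn.dist_triangle (u := u) (v := w) (w := γ.getVert t)
  have h₂ := hconn.dist_triangle (u := γ.getVert t) (v := w) (w := v)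
  rw [hγ.dist_start_getVert (by omega)] at h₁
  rw [hγ.dist_getVert_end (by omega), dist_comm (u := γ.getVert t) (v := w),
    dist_comm (u := w) (v := v)] at h₂
  omega

section Detour

variable {a b : V}

/-- The slack `4 * c` at the ends is what splitting a detour at a vertex within `4 * c` of `γ`
produces. -/
structure IsDetour (e : G.Walk a b) (γ : G.Walk x y) (c A B : ℕ) : Prop where
  start_near : ∃ τ ≤ A, G.dist a (γ.getVert τ) ≤ 4 * c
  end_near : ∃ τ, B ≤ τ ∧ τ ≤ γ.length ∧ G.dist b (γ.getVert τ) ≤ 4 * c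
  far : ∀ v ∈ e.support, ∀ t, A ≤ t → t ≤ B → c < G.dist v (γ.getVert t)

variable {e : G.Walk a b} {γ : G.Walk x y} {c A B : ℕ}

lemma IsDetour.take_drop (h : e.IsDetour γ c A B) {j τ : ℕ} (hAτ : A ≤ τ) (hτB : τ ≤ B)
    (hj : G.dist (e.getVert j) (γ.getVert τ) ≤ 4 * c) :
    (e.take j).IsDetour γ c A τ ∧ (e.drop j).IsDetour γ c τ B := by
  obtain ⟨τ', hBτ', hτ'γ, -⟩ := h.end_near
  exact ⟨⟨h.start_near, ⟨τ, le_rfl, by omega, hj⟩,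
      fun v hv t ht₁ ht₂ => h.far v ((isSubwalk_take e j).support_subset hv) t ht₁ (ht₂.trans hτB)⟩,
    ⟨⟨τ, le_rfl, hj⟩, h.end_near,
      fun v hv t ht₁ ht₂ => h.far v ((isSubwalk_drop e j).support_subset hv) t (hAτ.trans ht₁) ht₂⟩⟩

lemma IsDetour.lift (h : e.IsDetour γ c A B) {lo hi : ℕ} (hlo : A ≤ lo) (hhi : hi ≤ B)
    (hfar : ∀ v ∈ e.support, ∀ t, lo ≤ t → t ≤ hi → 4 * c < G.dist v (γ.getVert t)) :
    e.IsDetour γ (4 * c) lo hi := by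
  obtain ⟨τ₁, hτ₁, d₁⟩ := h.start_near
  obtain ⟨τ₂, hτ₂, hτ₂γ, d₂⟩ := h.end_near
  exact ⟨⟨τ₁, hτ₁.trans hlo, by omega⟩, ⟨τ₂, hhi.trans hτ₂, hτ₂γ, by omega⟩, hfar⟩

end Detour

end Walk

open Walk

lemma GraphHyperbolic.mono {δ δ' : ℝ} (hG : GraphHyperbolic G δ) (hδ : δ ≤ δ') :
    GraphHyperbolic G δ' := by
  intro a b c γ₁ γ₂ γ₃ h₁ h₂ h₃ u hu
  obtain ⟨v, hv, huv⟩ := hG γ₁ γ₂ γ₃ h₁ h₂ h₃ u hu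
  exact ⟨v, hv, huv.trans hδ⟩

namespace GraphHyperbolic

section Divergence

variable {δ : ℕ} (hG : GraphHyperbolic G δ) (hconn : G.Connected)
include hG hconn

/-- Bisect `p` and use a thin triangle over `γ`: each halving costs `δ`. -/
theorem exists_dist_le_of_length_le_two_pow (k : ℕ) {a b z : V} {γ p : G.Walk a b}
    (hγ : γ.IsGeodesic) (hp : p.length ≤ 2 ^ k) (hz : z ∈ γ.support) :
    ∃ w ∈ p.support, G.dist z w ≤ δ * k := by
  induction k generalizing a b z γ p with
  | zero =>
    obtain ⟨n, rfl, -⟩ := mem_support_iff_exists_getVert.mp hz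
    have hγ₁ : γ.length ≤ 1 := by rw [hγ]; exact (dist_le p).trans (by simpa using hp)
    rcases Nat.eq_zero_or_pos n with rfl | hn
    · exact ⟨a, p.start_mem_support, by simp⟩
    · exact ⟨b, p.end_mem_support, by simp [γ.getVert_of_length_le (by omega : γ.length ≤ n)]⟩
  | succ k ih =>
    set j := (p.length + 1) / 2
    obtain ⟨σ₁, hσ₁⟩ := hconn.exists_walk_length_eq_dist a (p.getVert j)
    obtain ⟨σ₂, hσ₂⟩ := hconn.exists_walk_length_eq_dist (p.getVert j) b
    have near : ∀ v, v ∈ σ₂.reverse.support ∨ v ∈ σ₁.reverse.support →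
        ∃ w ∈ p.support, G.dist v w ≤ δ * k := by
      rintro v (hv | hv) <;> rw [support_reverse, List.mem_reverse] at hv
      · obtain ⟨w, hw, h⟩ := ih (p := p.drop j) hσ₂ (by rw [drop_length]; omega) hv
        exact ⟨w, (isSubwalk_drop p j).support_subset hw, h⟩
      · obtain ⟨w, hw, h⟩ := ih (p := p.take j) hσ₁ (by rw [take_length]; omega) hv
        exact ⟨w, (isSubwalk_take p j).support_subset hw, h⟩
    obtain ⟨v, hv, hzv⟩ := hG γ σ₂.reverse σ₁.reverse hγ (IsGeodesic.reverse hσ₂)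
      (IsGeodesic.reverse hσ₁) z hz
    obtain ⟨w, hw, hvw⟩ := near v hv
    have hzv : G.dist z v ≤ δ := by exact_mod_cast hzv
    refine ⟨w, hw, ?_⟩
    calc G.dist z w ≤ G.dist z v + G.dist v w := hconn.dist_triangle
      _ ≤ δ * (k + 1) := by rw [mul_add_one]; omega

theorem two_pow_lt_length_of_lt_dist {k : ℕ} {a b z : V} {γ p : G.Walk a b}
    (hγ : γ.IsGeodesic) (hz : z ∈ γ.support) (hfar : ∀ w ∈ p.support, δ * k < G.dist z w) :
    2 ^ k < p.length := by
  by_contra! hp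
  obtain ⟨w, hw, hzw⟩ := hG.exists_dist_le_of_length_le_two_pow hconn k hγ hp hz
  exact (hfar w hw).not_ge hzw

theorem two_pow_lt_length_add_of_isDetour {k A B : ℕ} {a b x y : V} {e : G.Walk a b}
    {γ : G.Walk x y} (hγ : γ.IsGeodesic) (he : e.IsDetour γ (δ * k) A B)
    (hAB : 10 * (δ * k) + 2 ≤ B - A) : 2 ^ k < e.length + 8 * (δ * k) := by
  obtain ⟨τ₁, hτ₁, d₁⟩ := he.start_near
  obtain ⟨τ₂, hτ₂, hτ₂γ, d₂⟩ := he.end_near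
  obtain ⟨cap₁, hcap₁⟩ := hconn.exists_walk_length_eq_dist (γ.getVert τ₁) a
  obtain ⟨cap₂, hcap₂⟩ := hconn.exists_walk_length_eq_dist b (γ.getVert τ₂)
  rw [dist_comm] at d₁
  -- A point of `γ` well inside `[A, B]` is far from `e` and from both caps.
  set t := A + 5 * (δ * k) + 1
  have hτ₁τ₂ : τ₁ ≤ τ₂ := by omega
  have ht : γ.getVert t ∈ (γ.slice hτ₁τ₂).support :=
    getVert_mem_support_slice γ hτ₁τ₂ (by omega) (by omega)
  have hfar : ∀ w ∈ (cap₁.append (e.append cap₂)).support, δ * k < G.dist (γ.getVert t) w := by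
    intro w hw
    have d₁t := hγ.dist_getVert (i := τ₁) (j := t) (by omega) (by omega)
    have dt₂ := hγ.dist_getVert (i := t) (j := τ₂) (by omega) hτ₂γ
    simp only [mem_support_append_iff] at hw
    rcases hw with hw | hw | hw
    · have := cap₁.dist_start_le_of_mem_support hw
      have := hconn.dist_triangle (u := γ.getVert τ₁) (v := w) (w := γ.getVert t)
      rw [dist_comm (u := w)] at this
      omega
    · rw [dist_comm]
      exact he.far w hw t (by omega) (by omega)
    · have := cap₂.dist_le_of_mem_support_end hw
      have := hconn.dist_triangle (u := γ.getVert t) (v := w) (w := γ.getVert τ₂)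
      omega
  have := hG.two_pow_lt_length_of_lt_dist hconn (hγ.slice hτ₁τ₂) ht hfar
  simp only [length_append] at this
  omega

/-- If the detour comes within `4c` of the middle third it splits there into two detours;
otherwise it is a detour at distance `4c` around the middle third, and the gain from `2^k` to
`2^(4k)` pays for losing two thirds of the stretch. -/
theorem mul_two_pow_le_length_of_isDetour (hδ : 1 ≤ δ) {x y : V} {γ : G.Walk x y}
    (hγ : γ.IsGeodesic) (n : ℕ) :
    ∀ {k A B : ℕ} {a b : V} {e : G.Walk a b}, e.IsDetour γ (δ * k) A B → B - A = n → 8 ≤ k →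
      100 * (δ * k) ≤ 2 ^ k → 10 * (δ * k) + 2 ≤ n →
      (n + 1) * 2 ^ k ≤ 200 * (δ * k) * e.length := by
  induction n using Nat.strong_induction_on with
  | _ n ih =>
  intro k A B a b e he hn hk hpow hlong
  have hc : 8 ≤ δ * k := hk.trans (Nat.le_mul_of_pos_left k hδ)
  by_cases hshort : n ≤ 174 * (δ * k) + 6
  · have := hG.two_pow_lt_length_add_of_isDetour hconn hγ he (by omega)
    nlinarith
  set lo := A + n / 3 with hlo
  set hi := B - n / 3 with hhi
  by_cases hmid : ∃ v ∈ e.support, ∃ τ, lo ≤ τ ∧ τ ≤ hi ∧ G.dist v (γ.getVert τ) ≤ 4 * (δ * k)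
  · obtain ⟨v, hv, τ, hτlo, hτhi, hvτ⟩ := hmid
    obtain ⟨j, rfl, hj⟩ := mem_support_iff_exists_getVert.mp hv
    obtain ⟨h₁, h₂⟩ := he.take_drop (by omega) (by omega) hvτ
    have hleft := ih (τ - A) (by omega) h₁ rfl hk hpow (by omega)
    have hright := ih (B - τ) (by omega) h₂ rfl hk hpow (by omega)
    rw [take_length, min_eq_left hj] at hleft
    rw [drop_length] at hright
    calc (n + 1) * 2 ^ k ≤ (τ - A + 1) * 2 ^ k + (B - τ + 1) * 2 ^ k := by
          rw [← add_mul]; exact Nat.mul_le_mul_right _ (by omega)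
      _ ≤ 200 * (δ * k) * j + 200 * (δ * k) * (e.length - j) := add_le_add hleft hright
      _ = 200 * (δ * k) * e.length := by rw [← mul_add, Nat.add_sub_cancel' hj]
  · simp only [not_exists, not_and, not_le] at hmid
    have h4 : δ * (4 * k) = 4 * (δ * k) := by ring
    have he' := he.lift (lo := lo) (hi := hi) (by omega) (by omega) hmid
    rw [← h4] at he'
    have hpow' : 100 * (δ * (4 * k)) ≤ 2 ^ (4 * k) :=
      calc 100 * (δ * (4 * k)) = 4 * (100 * (δ * k)) := by ring
        _ ≤ 2 ^ 2 * 2 ^ k := by gcongr; norm_num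
        _ = 2 ^ (2 + k) := (pow_add ..).symm
        _ ≤ 2 ^ (4 * k) := Nat.pow_le_pow_right two_pos (by omega)
    have hrec := ih (hi - lo) (by omega) he' rfl (by omega) hpow' (by omega)
    exact add_one_mul_two_pow_le_of_le_four_mul (by omega) (by omega) (hrec.trans_eq (by ring))

end Divergence

end GraphHyperbolic

namespace Walk

variable {u v x y : V}

open scoped Classical in
noncomputable def farTimes (p : G.Walk u v) (γ : G.Walk x y) (r : ℕ) : Finset ℕ :=
  (Finset.range (γ.length + 1)).filter fun t => ∀ w ∈ p.support, r < G.dist w (γ.getVert t)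

lemma mem_farTimes {p : G.Walk u v} {γ : G.Walk x y} {r t : ℕ} :
    t ∈ p.farTimes γ r ↔ t ≤ γ.length ∧ ∀ w ∈ p.support, r < G.dist w (γ.getVert t) := by
  simp [farTimes]

lemma exists_dist_le_of_notMem_farTimes {p : G.Walk u v} {γ : G.Walk x y} {r t : ℕ}
    (ht : t ≤ γ.length) (hnot : t ∉ p.farTimes γ r) :
    ∃ w ∈ p.support, G.dist w (γ.getVert t) ≤ r := by
  simpa [mem_farTimes, ht] using hnot

def IsLastNearTime (p : G.Walk u v) (γ : G.Walk x y) (H j t : ℕ) : Prop :=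
  G.dist (p.getVert j) (γ.getVert t) ≤ H ∧
    ∀ t', t < t' → t' ≤ γ.length → H < G.dist (p.getVert j) (γ.getVert t')

lemma IsLastNearTime.exists_next {p γ : G.Walk x y} {H j₀ t₀ : ℕ}
    (h₀ : IsLastNearTime p γ H j₀ t₀) (ht₀ : t₀ < γ.length) :
    ∃ j₁ t₁' t₁, j₀ < j₁ ∧ j₁ ≤ p.length ∧ t₀ < t₁' ∧ t₁' ≤ t₁ ∧ t₁ ≤ γ.length ∧
      IsLastNearTime p γ H j₁ t₁ ∧ G.dist (p.getVert j₁) (γ.getVert t₁') ≤ H ∧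
      ∀ j, j₀ ≤ j → j ≤ j₁ → ∀ t, t₀ < t → t < t₁' → H < G.dist (p.getVert j) (γ.getVert t) := by
  classical
  have hj₀ : j₀ < p.length := by
    by_contra! h
    have := h₀.2 γ.length ht₀ le_rfl
    rw [p.getVert_of_length_le h, getVert_length, dist_self] at this
    omega
  have hex : ∃ j, j₀ < j ∧ j ≤ p.length ∧
      ∃ t, t₀ < t ∧ t ≤ γ.length ∧ G.dist (p.getVert j) (γ.getVert t) ≤ H :=
    ⟨p.length, hj₀, le_rfl, γ.length, ht₀, le_rfl, by simp⟩
  obtain ⟨hj₀₁, hj₁, tw, htw, htwγ, hdw⟩ := Nat.find_spec hex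
  set j₁ := Nat.find hex
  have hext : ∃ t, t₀ < t ∧ G.dist (p.getVert j₁) (γ.getVert t) ≤ H := ⟨tw, htw, hdw⟩
  obtain ⟨ht₀₁, hd₁'⟩ := Nat.find_spec hext
  have ht₁'w : Nat.find hext ≤ tw := Nat.find_min' hext ⟨htw, hdw⟩
  let near : ℕ → Prop := fun t => G.dist (p.getVert j₁) (γ.getVert t) ≤ H
  refine ⟨j₁, Nat.find hext, Nat.findGreatest near γ.length, hj₀₁, hj₁, ht₀₁,
    ht₁'w.trans (Nat.le_findGreatest (P := near) htwγ hdw), Nat.findGreatest_le _,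
      ⟨Nat.findGreatest_spec (P := near) htwγ hdw,
      fun t ht htγ => not_le.mp (Nat.findGreatest_is_greatest (P := near) ht htγ)⟩, hd₁', ?_⟩
  intro j hj₀j hjj₁ t ht₀t htt₁
  rcases hj₀j.eq_or_lt with rfl | hj₀j
  · exact h₀.2 t ht₀t (by omega)
  rcases hjj₁.lt_or_eq with hjj₁ | rfl
  · have := Nat.find_min hex hjj₁
    simp only [not_and, not_exists, not_le] at this
    exact this hj₀j (by omega) t ht₀t (by omega)
  · have := Nat.find_min hext htt₁
    simp only [not_and, not_le] at this
    exact this ht₀t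

lemma filter_farTimes_subset_Ioo (hconn : G.Connected) {p γ : G.Walk x y} (hγ : γ.IsGeodesic)
    {H j₀ j₁ t₀ t₁' t₁ : ℕ} (h₀ : G.dist (p.getVert j₀) (γ.getVert t₀) ≤ H)
    (h₁ : IsLastNearTime p γ H j₁ t₁) (h₁' : G.dist (p.getVert j₁) (γ.getVert t₁') ≤ H)
    (ht₀ : t₀ ≤ γ.length) (ht₁' : t₁' ≤ t₁) (ht₁ : t₁ ≤ γ.length) :
    (p.farTimes γ (12 * H)).filter (fun t => t₀ < t ∧ t ≤ t₁) ⊆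
      Finset.Ioo (t₀ + 11 * H) (t₁' - 11 * H) := by
  intro t ht
  rw [Finset.mem_filter, mem_farTimes] at ht
  obtain ⟨⟨htγ, hfar⟩, ht₀t, htt₁⟩ := ht
  have far₀ := hfar _ (p.getVert_mem_support j₀)
  have far₁ := hfar _ (p.getVert_mem_support j₁)
  have near₀ := hγ.dist_getVert_le_add hconn (p.getVert j₀) ht₀ htγ
  have near₁ := hγ.dist_getVert_le_add hconn (p.getVert j₁) (ht₁'.trans ht₁) htγ
  have span := hconn.dist_triangle (u := γ.getVert t₁') (v := p.getVert j₁) (w := γ.getVert t₁)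
  rw [hγ.dist_getVert ht₁' ht₁, dist_comm (u := γ.getVert t₁')] at span
  have := h₁.1
  rw [Finset.mem_Ioo]
  omega

end Walk

namespace GraphHyperbolic

section Sweep

variable {δ : ℕ} (hG : GraphHyperbolic G δ) (hconn : G.Connected) (hδ : 1 ≤ δ)
  {x y : V} {γ : G.Walk x y} (hγ : γ.IsGeodesic) {m : ℕ} (hm : 8 ≤ m)
  (hpow : 100 * (δ * m) ≤ 2 ^ m)
include hG hconn hδ hγ hm hpow

/-- The piece of `p` from `j₀` to the next vertex that comes near `γ` is a detour around the
far times up to `t₁`. -/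
theorem exists_next_card_filter_farTimes_le {p : G.Walk x y} {j₀ t₀ : ℕ}
    (h₀ : IsLastNearTime p γ (δ * m) j₀ t₀) (ht₀ : t₀ < γ.length) :
    ∃ j₁ t₁, j₀ < j₁ ∧ j₁ ≤ p.length ∧ t₀ < t₁ ∧ IsLastNearTime p γ (δ * m) j₁ t₁ ∧
      ((p.farTimes γ (12 * (δ * m))).filter fun t => t₀ < t ∧ t ≤ t₁).card * 2 ^ m ≤
        200 * (δ * m) * (j₁ - j₀) := by
  obtain ⟨j₁, t₁', t₁, hj, hj₁, ht, ht', ht₁γ, h₁, h₁', hfar⟩ := h₀.exists_next ht₀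
  refine ⟨j₁, t₁, hj, hj₁, by omega, h₁, ?_⟩
  have hcard := (Finset.card_le_card (filter_farTimes_subset_Ioo hconn hγ h₀.1 h₁ h₁'
    ht₀.le ht' ht₁γ)).trans_eq (Nat.card_Ioo _ _)
  have hH : 8 ≤ δ * m := hm.trans (Nat.le_mul_of_pos_left m hδ)
  have hnear₀ := h₀.1
  by_cases hgap : t₁' ≤ t₀ + 22 * (δ * m) + 1
  · rw [show ((p.farTimes γ (12 * (δ * m))).filter fun t => t₀ < t ∧ t ≤ t₁).card = 0 by omega]
    simp
  have he : (p.slice hj.le).IsDetour γ (δ * m) (t₀ + 1) (t₁' - 1) := by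
    refine ⟨⟨t₀, by omega, by omega⟩, ⟨t₁', by omega, by omega, by omega⟩, ?_⟩
    intro v hv t ht₁ ht₂
    obtain ⟨j, hj₀j, hjj₁, rfl⟩ := p.exists_eq_getVert_of_mem_support_slice hj.le hj₁ hv
    exact hfar j hj₀j hjj₁ t (by omega) (by omega)
  have := hG.mul_two_pow_le_length_of_isDetour hconn hδ hγ _ he rfl hm hpow (by omega)
  rw [length_slice _ _ hj₁] at this
  exact (Nat.mul_le_mul_right _ (by omega)).trans this

theorem card_filter_farTimes_mul_le {p : G.Walk x y} (n : ℕ) :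
    ∀ {j₀ t₀ : ℕ}, p.length - j₀ = n → IsLastNearTime p γ (δ * m) j₀ t₀ →
      ((p.farTimes γ (12 * (δ * m))).filter (t₀ < ·)).card * 2 ^ m ≤
        200 * (δ * m) * (p.length - j₀) := by
  induction n using Nat.strong_induction_on with
  | _ n ih =>
  intro j₀ t₀ hn h₀
  by_cases ht₀ : γ.length ≤ t₀
  · rw [Finset.filter_false_of_mem fun t ht => by rw [mem_farTimes] at ht; omega]
    simp
  obtain ⟨j₁, t₁, hj, hj₁, ht, h₁, hcount⟩ :=
    hG.exists_next_card_filter_farTimes_le hconn hδ hγ hm hpow h₀ (not_le.mp ht₀)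
  have hrest := ih (p.length - j₁) (by omega) rfl h₁
  set F := p.farTimes γ (12 * (δ * m))
  have hsplit : (F.filter (t₀ < ·)).card ≤
      (F.filter fun t => t₀ < t ∧ t ≤ t₁).card + (F.filter (t₁ < ·)).card := by
    refine (Finset.card_le_card fun t ht => ?_).trans (Finset.card_union_le _ _)
    simp only [Finset.mem_union, Finset.mem_filter] at ht ⊢
    rcases le_or_gt t t₁ with h | h
    exacts [Or.inl ⟨ht.1, ht.2, h⟩, Or.inr ⟨ht.1, h⟩]
  calc (F.filter (t₀ < ·)).card * 2 ^ m
      ≤ (F.filter fun t => t₀ < t ∧ t ≤ t₁).card * 2 ^ m + (F.filter (t₁ < ·)).card * 2 ^ m := by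
        rw [← add_mul]; exact Nat.mul_le_mul_right _ hsplit
    _ ≤ 200 * (δ * m) * (j₁ - j₀) + 200 * (δ * m) * (p.length - j₁) := add_le_add hcount hrest
    _ = 200 * (δ * m) * (p.length - j₀) := by rw [← mul_add]; congr 1; omega

/-- Sweep along `p`, anchoring its successive vertices to their last near times on `γ`. -/
theorem card_farTimes_mul_le (p : G.Walk x y) :
    (p.farTimes γ (12 * (δ * m))).card * 2 ^ m ≤ 200 * (δ * m) * p.length := by
  have hstart : IsLastNearTime p γ (δ * m) 0 (min (δ * m) γ.length) := by
    refine ⟨?_, fun t ht htγ => ?_⟩ <;> rw [getVert_zero]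
    · rw [hγ.dist_start_getVert (min_le_right _ _)]; exact min_le_left _ _
    · rw [hγ.dist_start_getVert htγ]; omega
  have := hG.card_filter_farTimes_mul_le hconn hδ hγ hm hpow (p.length - 0) rfl hstart
  rwa [Finset.filter_true_of_mem, Nat.sub_zero] at this
  intro t ht
  rw [mem_farTimes] at ht
  have := ht.2 x p.start_mem_support
  rw [hγ.dist_start_getVert ht.1] at this
  omega

end Sweep

section Bigons

variable {δ : ℕ} (hG : GraphHyperbolic G δ) (hconn : G.Connected) (hδ : 1 ≤ δ)
  {K : ℕ} (hK : 1 ≤ K) {x y : V} {γ : G.Walk x y} (hγ : γ.IsGeodesic)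
include hG hconn hδ hK hγ

theorem six_mul_card_farTimes_le {p : G.Walk x y} (hp : p.length ≤ K * γ.length) :
    6 * (p.farTimes γ (12 * (δ * (1200 * δ * K)))).card ≤ γ.length := by
  set m := 1200 * δ * K
  have hm : 1200 ≤ m := le_mul_of_le_of_one_le (Nat.le_mul_of_pos_right 1200 hδ) hK
  have hsq := Nat.mul_self_le_two_pow (k := m) (by omega)
  have hpow : 100 * (δ * m) ≤ 2 ^ m := by
    calc 100 * (δ * m) = 100 * δ * m := by ring
      _ ≤ m * m := Nat.mul_le_mul_right m (by simp only [m]; nlinarith)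
      _ ≤ 2 ^ m := hsq
  have hcount := hG.card_farTimes_mul_le hconn hδ hγ (by omega) hpow p
  refine Nat.le_of_mul_le_mul_right ?_ (by positivity : 0 < 200 * (δ * m) * K)
  calc 6 * (p.farTimes γ _).card * (200 * (δ * m) * K) = (p.farTimes γ _).card * (m * m) := by
        simp only [m]; ring
    _ ≤ (p.farTimes γ _).card * 2 ^ m := Nat.mul_le_mul_left _ hsq
    _ ≤ 200 * (δ * m) * (K * γ.length) := hcount.trans (Nat.mul_le_mul_left _ hp)
    _ = γ.length * (200 * (δ * m) * K) := by ring

/-- Each walk misses at most a sixth of the times of `γ`, so some time in the middle third is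
near both. -/
theorem exists_near_pair {α₁ α₂ : G.Walk x y} (h₁ : α₁.length ≤ K * γ.length)
    (h₂ : α₂.length ≤ K * γ.length) {D : ℕ}
    (hD : 3 * (D + 12 * (δ * (1200 * δ * K)) + 1) ≤ γ.length) :
    ∃ w₁ ∈ α₁.support, ∃ w₂ ∈ α₂.support, (D < G.dist x w₁ ∧ D < G.dist y w₁) ∧
      (D < G.dist x w₂ ∧ D < G.dist y w₂) ∧ G.dist w₁ w₂ ≤ 24 * (δ * (1200 * δ * K)) := by
  obtain ⟨t, hWt, htW, ht₁, ht₂⟩ := exists_notMem_notMem_of_six_mul_card_le hD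
    (hG.six_mul_card_farTimes_le hconn hδ hK hγ h₁) (hG.six_mul_card_farTimes_le hconn hδ hK hγ h₂)
  obtain ⟨w₁, hw₁, d₁⟩ := exists_dist_le_of_notMem_farTimes (by omega) ht₁
  obtain ⟨w₂, hw₂, d₂⟩ := exists_dist_le_of_notMem_farTimes (by omega) ht₂
  refine ⟨w₁, hw₁, w₂, hw₂, hγ.lt_dist_of_dist_getVert_le hconn (by omega) (by omega) d₁,
    hγ.lt_dist_of_dist_getVert_le hconn (by omega) (by omega) d₂, ?_⟩
  have := hconn.dist_triangle (u := w₁) (v := γ.getVert t) (w := w₂)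
  rw [dist_comm (u := γ.getVert t)] at this
  omega

end Bigons

end GraphHyperbolic

end SimpleGraph

theorem hyperbolic_hasNoFatBigons_general
    {V : Type*} (X : SimpleGraph V)
    (hXconn : X.Connected)
    (δ : ℝ) (hX : GraphHyperbolic X δ) :
    ∀ x₀ : V, HasNoFatBigons X x₀ := by
  intro x₀ L hL
  set δ₀ := ⌈δ⌉₊ + 1
  have hX₀ : GraphHyperbolic X δ₀ :=
    hX.mono (by simp only [δ₀]; push_cast; linarith [Nat.le_ceil δ])
  set K := ⌈L⌉₊
  set H := δ₀ * (1200 * δ₀ * K) with hH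
  refine ⟨(24 * H : ℕ), Nat.cast_nonneg _, fun C _ => ⟨3 * (⌈C⌉₊ + 12 * H + 1), fun x hx => ?_⟩⟩
  by_contra! hfar
  obtain ⟨α₁, α₂, h₁, h₂, hsep⟩ := hx
  obtain ⟨γ, hγ⟩ := hXconn.exists_walk_length_eq_dist x₀ x
  have hlen (α : X.Walk x₀ x) (hα : (α.length : ℝ) ≤ L * X.dist x₀ x) :
      α.length ≤ K * γ.length := by
    have : (α.length : ℝ) ≤ K * X.dist x₀ x := hα.trans (by gcongr; exact Nat.le_ceil L)
    rw [hγ]; exact_mod_cast this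
  have hK : 1 ≤ K := Nat.one_le_ceil_iff.mpr (by linarith)
  obtain ⟨w₁, hw₁, w₂, hw₂, d₁, d₂, d₁₂⟩ := hX₀.exists_near_pair hXconn (by omega) hK hγ
    (hlen α₁ h₁) (hlen α₂ h₂) (D := ⌈C⌉₊) (by omega)
  have hC (n : ℕ) (hn : ⌈C⌉₊ < n) : C < n := (Nat.le_ceil C).trans_lt (by exact_mod_cast hn)
  have := hsep w₁ hw₁ w₂ hw₂ ⟨hC _ d₁.1, hC _ d₁.2⟩ ⟨hC _ d₂.1, hC _ d₂.2⟩
  have : (X.dist w₁ w₂ : ℝ) ≤ (24 * H : ℕ) := by exact_mod_cast d₁₂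
  linarith

/-- A `δ`-hyperbolic connected graph of uniformly bounded degree has no
fat bigons (at any basepoint). -/
theorem hyperbolic_hasNoFatBigons
    {V : Type*} (X : SimpleGraph V)
    (hXconn : X.Connected) (hXdeg : BddDegree X)
    (δ : ℝ) (hδ : 1 ≤ δ) (hX : GraphHyperbolic X δ) :
    ∀ x₀ : V, HasNoFatBigons X x₀ :=
  hyperbolic_hasNoFatBigons_general X hXconn δ hX
end
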